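/- arXiv:2012.04907 — 3 statements merged into one kernel-verified Lean document; each statement's English description precedes it below -/
import Mathlib

section
/- Let H be a complex Hilbert space, S₀ and S_I bounded symmetric operators on H, E ∈ ℝ, and Ψ a unit vector with S₀Ψ = EΨ. Suppose that for every κ ≠ 0 (in some punctured neighborhood of 0) there are a real number E(κ) and a unit vector Ξ(κ) with (S₀ + κS_I)Ξ(κ) = E(κ)Ξ(κ) and ⟪Ψ, Ξ(κ)⟫ ≠ 0, and that |⟪Ψ, Ξ(κ)⟫| → 1 as κ → 0. Then E(κ) = E + κ⟪Ψ, S_IΨ⟫ + o(κ) as κ → 0, i.e. (E(κ) − E − κ⟪Ψ, S_IΨ⟫)/κ tends to 0 as κ → 0 along κ ≠ 0. -/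
/-! Pairing the perturbed eigenvalue equation with `Ψ` and moving `S₀` across the inner product
gives the exact identity `κ ⟪S_I Ψ, Ξ(κ)⟫ = (E(κ) - E) ⟪Ψ, Ξ(κ)⟫`, so the difference quotient
`(E(κ) - E) / κ` equals `⟪S_I Ψ, Ξ(κ)⟫ / ⟪Ψ, Ξ(κ)⟫`. Since
`‖Ξ(κ) - ⟪Ψ, Ξ(κ)⟫ Ψ‖² = 1 - |⟪Ψ, Ξ(κ)⟫|² → 0`, this quotient tends to `⟪S_I Ψ, Ψ⟫`. -/

open scoped ComplexInnerProductSpace InnerProductSpace Topology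
open Filter

section

variable {𝕜 E : Type*} [RCLike 𝕜] [NormedAddCommGroup E] [InnerProductSpace 𝕜 E]

theorem norm_sub_inner_smul_sq {u : E} (hu : ‖u‖ = 1) (x : E) :
    ‖x - ⟪u, x⟫_𝕜 • u‖ ^ 2 = ‖x‖ ^ 2 - ‖⟪u, x⟫_𝕜‖ ^ 2 := by
  rw [@norm_sub_sq 𝕜, inner_smul_right, ← inner_conj_symm x u, RCLike.mul_conj, norm_smul, hu]
  norm_cast
  ring

theorem tendsto_sub_inner_smul_of_norm_inner_tendsto_one {ι : Type*} {l : Filter ι}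
    {u : E} (hu : ‖u‖ = 1) {x : ι → E} (hx : ∀ᶠ i in l, ‖x i‖ = 1)
    (hux : Tendsto (fun i => ‖⟪u, x i⟫_𝕜‖) l (𝓝 1)) :
    Tendsto (fun i => x i - ⟪u, x i⟫_𝕜 • u) l (𝓝 0) := by
  have hsq : Tendsto (fun i => ‖x i - ⟪u, x i⟫_𝕜 • u‖ ^ 2) l (𝓝 0) := by
    have h := (hux.pow 2).const_sub 1
    rw [one_pow, sub_self] at h
    refine h.congr' ?_
    filter_upwards [hx] with i hi
    rw [norm_sub_inner_smul_sq hu, hi, one_pow]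
  rw [tendsto_zero_iff_norm_tendsto_zero]
  simpa using hsq.sqrt

theorem tendsto_inner_div_inner_of_norm_inner_tendsto_one {ι : Type*} {l : Filter ι}
    {u : E} (hu : ‖u‖ = 1) {x : ι → E} (hx : ∀ᶠ i in l, ‖x i‖ = 1)
    (hux : Tendsto (fun i => ‖⟪u, x i⟫_𝕜‖) l (𝓝 1)) (v : E) :
    Tendsto (fun i => ⟪v, x i⟫_𝕜 / ⟪u, x i⟫_𝕜) l (𝓝 ⟪v, u⟫_𝕜) := by
  have hres : Tendsto (fun i => ⟪v, x i - ⟪u, x i⟫_𝕜 • u⟫_𝕜) l (𝓝 0) := by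
    simpa using (tendsto_const_nhds (x := v)).inner
      (tendsto_sub_inner_smul_of_norm_inner_tendsto_one hu hx hux)
  have hquot : Tendsto (fun i => ⟪v, x i - ⟪u, x i⟫_𝕜 • u⟫_𝕜 / ⟪u, x i⟫_𝕜) l (𝓝 0) := by
    rw [tendsto_zero_iff_norm_tendsto_zero]
    simpa [Pi.div_def] using (tendsto_zero_iff_norm_tendsto_zero.1 hres).div hux one_ne_zero
  have hne : ∀ᶠ i in l, ⟪u, x i⟫_𝕜 ≠ 0 := by
    filter_upwards [hux.eventually_ne one_ne_zero] with i hi h0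
    simp [h0] at hi
  refine (add_zero ⟪v, u⟫_𝕜 ▸ hquot.const_add ⟪v, u⟫_𝕜).congr' ?_
  filter_upwards [hne] with i hi
  rw [inner_sub_right, inner_smul_right]
  field_simp
  ring

theorem LinearMap.IsSymmetric.inner_apply_of_eigenvector {T : E →ₗ[𝕜] E} (hT : T.IsSymmetric)
    {μ : ℝ} {u : E} (hu : T u = (μ : 𝕜) • u) (x : E) :
    ⟪u, T x⟫_𝕜 = μ * ⟪u, x⟫_𝕜 := by
  rw [← hT, hu, inner_smul_left, RCLike.conj_ofReal]

theorem LinearMap.IsSymmetric.mul_inner_eq_of_perturbed_eigenvector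
    {T V : E →ₗ[𝕜] E} (hT : T.IsSymmetric) {μ : ℝ} {u : E} (hu : T u = (μ : 𝕜) • u)
    {κ ν : 𝕜} {ξ : E} (hξ : (T + κ • V) ξ = ν • ξ) :
    κ * ⟪u, V ξ⟫_𝕜 = (ν - μ) * ⟪u, ξ⟫_𝕜 := by
  have h := congr_arg (inner 𝕜 u) hξ
  rw [LinearMap.add_apply, LinearMap.smul_apply, inner_add_right, inner_smul_right,
    inner_smul_right, hT.inner_apply_of_eigenvector hu] at h
  linear_combination h

end

theorem first_order_expansion_of_eigenvalue_general
    {H : Type*} [NormedAddCommGroup H] [InnerProductSpace ℂ H]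
    (S₀ SI : H →L[ℂ] H)
    (hS₀ : ∀ x y : H, ⟪S₀ x, y⟫ = ⟪x, S₀ y⟫)
    (hSI : ∀ x y : H, ⟪SI x, y⟫ = ⟪x, SI y⟫)
    (E : ℝ) (Ψ : H) (hΨnorm : ‖Ψ‖ = 1) (hΨ : S₀ Ψ = (E : ℂ) • Ψ)
    (E' : ℝ → ℝ) (Ξ : ℝ → H)
    (heig : ∀ᶠ κ in 𝓝[≠] (0 : ℝ),
      ‖Ξ κ‖ = 1 ∧ (S₀ + (κ : ℂ) • SI) (Ξ κ) = (E' κ : ℂ) • Ξ κ ∧ ⟪Ψ, Ξ κ⟫ ≠ 0)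
    (hoverlap : Filter.Tendsto (fun κ : ℝ => ‖⟪Ψ, Ξ κ⟫‖) (𝓝[≠] (0 : ℝ)) (𝓝 1)) :
    Filter.Tendsto (fun κ : ℝ => (E' κ - E - κ * (⟪Ψ, SI Ψ⟫).re) / κ)
      (𝓝[≠] (0 : ℝ)) (𝓝 0) := by
  have hratio := tendsto_inner_div_inner_of_norm_inner_tendsto_one hΨnorm
    (heig.mono fun _ h => h.1) hoverlap (SI Ψ)
  have hquot : ∀ᶠ κ in 𝓝[≠] (0 : ℝ), ⟪SI Ψ, Ξ κ⟫ / ⟪Ψ, Ξ κ⟫ = ((E' κ - E) / κ : ℝ) := by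
    filter_upwards [heig, self_mem_nhdsWithin] with κ hκeig (hκ : κ ≠ 0)
    obtain ⟨-, hξ, hne⟩ := hκeig
    have h := LinearMap.IsSymmetric.mul_inner_eq_of_perturbed_eigenvector
      (T := (S₀ : H →ₗ[ℂ] H)) (V := SI) hS₀ hΨ hξ
    rw [ContinuousLinearMap.coe_coe, ← hSI] at h
    rw [div_eq_iff hne, Complex.ofReal_div, div_mul_eq_mul_div,
      eq_div_iff (Complex.ofReal_ne_zero.2 hκ)]
    push_cast
    linear_combination h
  have hre : Tendsto (fun κ : ℝ => (E' κ - E) / κ) (𝓝[≠] 0) (𝓝 (⟪Ψ, SI Ψ⟫).re) := by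
    simpa [Function.comp_def, hSI] using
      (Complex.continuous_re.tendsto _).comp (hratio.congr' hquot)
  refine (sub_self (⟪Ψ, SI Ψ⟫).re ▸ hre.sub_const (⟪Ψ, SI Ψ⟫).re).congr' ?_
  filter_upwards [self_mem_nhdsWithin] with κ (hκ : κ ≠ 0)
  field_simp

/-- Bounded-operator version of Arai's Theorem A: first-order asymptotic expansion
of a perturbed eigenvalue, assuming overlap of the unperturbed eigenvector with the
perturbed eigenvectors and that the overlap tends to 1. -/
theorem first_order_expansion_of_eigenvalue
    {H : Type*} [NormedAddCommGroup H] [InnerProductSpace ℂ H] [CompleteSpace H]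
    (S₀ SI : H →L[ℂ] H)
    (hS₀ : ∀ x y : H, ⟪S₀ x, y⟫ = ⟪x, S₀ y⟫)
    (hSI : ∀ x y : H, ⟪SI x, y⟫ = ⟪x, SI y⟫)
    (E : ℝ) (Ψ : H) (hΨnorm : ‖Ψ‖ = 1) (hΨ : S₀ Ψ = (E : ℂ) • Ψ)
    (E' : ℝ → ℝ) (Ξ : ℝ → H)
    (heig : ∀ᶠ κ in 𝓝[≠] (0 : ℝ),
      ‖Ξ κ‖ = 1 ∧ (S₀ + (κ : ℂ) • SI) (Ξ κ) = (E' κ : ℂ) • Ξ κ ∧ ⟪Ψ, Ξ κ⟫ ≠ 0)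
    (hoverlap : Filter.Tendsto (fun κ : ℝ => ‖⟪Ψ, Ξ κ⟫‖) (𝓝[≠] (0 : ℝ)) (𝓝 1)) :
    Filter.Tendsto (fun κ : ℝ => (E' κ - E - κ * (⟪Ψ, SI Ψ⟫).re) / κ)
      (𝓝[≠] (0 : ℝ)) (𝓝 0) :=
  first_order_expansion_of_eigenvalue_general S₀ SI hS₀ hSI E Ψ hΨnorm hΨ E' Ξ heig hoverlap
end

section
/- Let H be a complex Hilbert space, S₀ and S_I bounded symmetric operators on H, E₀ ∈ ℝ, Ψ a unit vector with S₀Ψ = E₀Ψ, and let P be the orthogonal projection onto the span of Ψ. Suppose R is a bounded operator on H satisfying P∘R = 0, R∘P = 0, and (S₀ − E₀)∘R = I − P (a reduced resolvent). Set η = R(S_IΨ), ν₀ = ‖η‖², a = Re⟪S_IΨ, η⟫ and b = Re⟪η, S_Iη⟫. Then for every κ ∈ ℝ there exists a unit vector Ξ ∈ H such that Re⟪Ξ, (S₀ + κS_I)Ξ⟫ = E₀ + (κ⟪Ψ, S_IΨ⟫ − aκ² + bκ³)/(1 + κ²ν₀); in particular the infimum of Re⟪Φ, (S₀ + κS_I)Φ⟫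 over unit vectors Φ is at most E₀ + (κ⟪Ψ, S_IΨ⟫ − aκ² + bκ³)/(1 + κ²ν₀). -/
open scoped ComplexInnerProductSpace

/-!
Evaluate the quadratic form of `S₀ + κ S_I` on the trial vector `Φ = Ψ - κ η`, `η = R (S_I Ψ)`.
Since `P R = 0`, `η ⟂ Ψ`, so `‖Φ‖² = 1 + κ² ‖η‖²`; and `(S₀ - E₀) R = 1 - P` gives
`S₀ η = S_I Ψ - ⟪Ψ, S_I Ψ⟫ Ψ + E₀ η`, which turns `⟪Φ, (S₀ + κ S_I) Φ⟫` into
`E₀ ‖Φ‖² + κ ⟪Ψ, S_I Ψ⟫ - κ² ⟪S_I Ψ, η⟫ + κ³ ⟪η, S_I η⟫`. Normalising `Φ` gives `Ξ`, and the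
infimum is bounded by this attained value because the quadratic form of a bounded operator `T`
is bounded below by `-‖T‖` on the unit sphere.
-/

open RCLike ContinuousLinearMap

section QuadraticForm

variable {𝕜 E : Type*} [RCLike 𝕜] [NormedAddCommGroup E] [InnerProductSpace 𝕜 E]

local notation "⟪" x ", " y "⟫" => inner 𝕜 x y

theorem norm_sub_smul_sq_of_inner_eq_zero {x y : E} (h : ⟪x, y⟫ = 0) (c : 𝕜) :
    ‖x - c • y‖ ^ 2 = ‖x‖ ^ 2 + ‖c‖ ^ 2 * ‖y‖ ^ 2 := by
  rw [@norm_sub_sq 𝕜, inner_smul_right, h, mul_zero, map_zero, norm_smul, mul_pow]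
  ring

theorem ContinuousLinearMap.re_inner_apply_eq_reApplyInnerSelf (T : E →L[𝕜] E) (x : E) :
    re ⟪x, T x⟫ = T.reApplyInnerSelf x := by
  rw [reApplyInnerSelf_apply, ← inner_conj_symm, conj_re]

theorem ContinuousLinearMap.reApplyInnerSelf_smul_inv_norm (T : E →L[𝕜] E) (x : E) :
    T.reApplyInnerSelf ((‖x‖⁻¹ : 𝕜) • x) = T.reApplyInnerSelf x / ‖x‖ ^ 2 := by
  rw [reApplyInnerSelf_smul, norm_inv, norm_ofReal, abs_norm, inv_pow, inv_mul_eq_div]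

theorem ContinuousLinearMap.bddBelow_re_inner_apply_of_norm_eq_one (T : E →L[𝕜] E) :
    BddBelow {e : ℝ | ∃ x : E, ‖x‖ = 1 ∧ e = re ⟪x, T x⟫} := by
  refine ⟨-‖T‖, ?_⟩
  rintro _ ⟨x, hx, rfl⟩
  have h := T.rayleighQuotient_le_norm x
  rw [rayleighQuotient, hx, one_pow, div_one] at h
  rw [T.re_inner_apply_eq_reApplyInnerSelf]
  exact (abs_le.mp h).1

end QuadraticForm

section ReducedResolvent

variable {H : Type*} [NormedAddCommGroup H] [InnerProductSpace ℂ H]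
  {Ψ : H} {P R : H →L[ℂ] H}

theorem inner_apply_eq_zero_of_comp_eq_zero (hΨ : Ψ ≠ 0) (hP : ∀ x, P x = ⟪Ψ, x⟫ • Ψ)
    (hPR : P ∘L R = 0) (x : H) : ⟪Ψ, R x⟫ = 0 := by
  have h : P (R x) = 0 := by rw [← comp_apply, hPR, zero_apply]
  rw [hP] at h
  exact (smul_eq_zero.mp h).resolve_right hΨ

theorem apply_apply_eq_of_comp_eq_one_sub {S₀ : H →L[ℂ] H} {E : ℂ} (hP : ∀ x, P x = ⟪Ψ, x⟫ • Ψ)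
    (hres : (S₀ - E • (1 : H →L[ℂ] H)) ∘L R = 1 - P) (x : H) :
    S₀ (R x) = x - ⟪Ψ, x⟫ • Ψ + E • R x := by
  have h := congr($hres x)
  rw [comp_apply, sub_apply, smul_apply, one_apply_eq_self, sub_apply,
    one_apply_eq_self, hP] at h
  rw [← h, sub_add_cancel]

end ReducedResolvent

theorem re_inner_sub_smul_apply_sub_smul
    {H : Type*} [NormedAddCommGroup H] [InnerProductSpace ℂ H] {S₀ SI : H →L[ℂ] H} {E₀ : ℝ}
    {Ψ η : H} (hΨ : ‖Ψ‖ = 1) (hΨη : ⟪Ψ, η⟫ = 0)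
    (hS₀Ψ : S₀ Ψ = (E₀ : ℂ) • Ψ) (hS₀η : S₀ η = SI Ψ - ⟪Ψ, SI Ψ⟫ • Ψ + (E₀ : ℂ) • η)
    (hSI : ⟪Ψ, SI η⟫ = ⟪SI Ψ, η⟫) (κ : ℝ) :
    (⟪Ψ - (κ : ℂ) • η, (S₀ + (κ : ℂ) • SI) (Ψ - (κ : ℂ) • η)⟫).re =
      E₀ * (1 + κ ^ 2 * ‖η‖ ^ 2) + (κ * (⟪Ψ, SI Ψ⟫).re - (⟪SI Ψ, η⟫).re * κ ^ 2
        + (⟪η, SI η⟫).re * κ ^ 3) := by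
  have hηΨ : ⟪η, Ψ⟫ = 0 := by rw [← inner_conj_symm, hΨη, map_zero]
  have hΨΨ : ⟪Ψ, Ψ⟫ = 1 := by rw [inner_self_eq_norm_sq_to_K, hΨ]; norm_num
  have hηη : ⟪η, η⟫ = ((‖η‖ ^ 2 : ℝ) : ℂ) := by rw [inner_self_eq_norm_sq_to_K]; norm_num
  have h : ⟪Ψ - (κ : ℂ) • η, (S₀ + (κ : ℂ) • SI) (Ψ - (κ : ℂ) • η)⟫ =
      (E₀ : ℂ) * (1 + (κ : ℂ) ^ 2 * ((‖η‖ ^ 2 : ℝ) : ℂ)) + ((κ : ℂ) * ⟪Ψ, SI Ψ⟫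
        - (κ : ℂ) ^ 2 * ⟪SI Ψ, η⟫ + (κ : ℂ) ^ 3 * ⟪η, SI η⟫) := by
    simp only [add_apply, smul_apply, map_sub, map_smul, hS₀Ψ, hS₀η, inner_sub_left,
      inner_sub_right, inner_add_right, inner_smul_left, inner_smul_right, hΨη, hηΨ, hΨΨ, hηη,
      hSI, Complex.conj_ofReal]
    ring
  rw [h]
  simp only [← Complex.ofReal_pow, Complex.add_re, Complex.sub_re, Complex.re_ofReal_mul,
    ← Complex.ofReal_mul, Complex.ofReal_re, Complex.one_re]
  ring

theorem variational_upper_bound_general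
    {H : Type*} [NormedAddCommGroup H] [InnerProductSpace ℂ H]
    (S₀ SI : H →L[ℂ] H)
    (hSI : ∀ x y : H, ⟪SI x, y⟫ = ⟪x, SI y⟫)
    (E₀ : ℝ) (Ψ : H) (hΨnorm : ‖Ψ‖ = 1) (hΨ : S₀ Ψ = (E₀ : ℂ) • Ψ)
    (P : H →L[ℂ] H) (hP : ∀ x : H, P x = (Submodule.orthogonalProjectionOnto (ℂ ∙ Ψ) x : H))
    (R : H →L[ℂ] H) (hPR : P ∘L R = 0)
    (hres : (S₀ - (E₀ : ℂ) • (1 : H →L[ℂ] H)) ∘L R = 1 - P)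
    (κ : ℝ) :
    (∃ Ξ : H, ‖Ξ‖ = 1 ∧
      (⟪Ξ, (S₀ + (κ : ℂ) • SI) Ξ⟫).re =
        E₀ + (κ * (⟪Ψ, SI Ψ⟫).re - (⟪SI Ψ, R (SI Ψ)⟫).re * κ ^ 2
              + (⟪R (SI Ψ), SI (R (SI Ψ))⟫).re * κ ^ 3)
             / (1 + κ ^ 2 * ‖R (SI Ψ)‖ ^ 2)) ∧
    sInf {e : ℝ | ∃ Φ : H, ‖Φ‖ = 1 ∧ e = (⟪Φ, (S₀ + (κ : ℂ) • SI) Φ⟫).re} ≤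
      E₀ + (κ * (⟪Ψ, SI Ψ⟫).re - (⟪SI Ψ, R (SI Ψ)⟫).re * κ ^ 2
            + (⟪R (SI Ψ), SI (R (SI Ψ))⟫).re * κ ^ 3)
           / (1 + κ ^ 2 * ‖R (SI Ψ)‖ ^ 2) := by
  set T := S₀ + (κ : ℂ) • SI
  set η := R (SI Ψ)
  have hΨ0 : Ψ ≠ 0 := ne_zero_of_norm_ne_zero (hΨnorm ▸ one_ne_zero)
  have hPΨ : ∀ x, P x = ⟪Ψ, x⟫ • Ψ := fun x => by
    rw [hP, ← Submodule.starProjection_apply, Submodule.starProjection_unit_singleton ℂ hΨnorm]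
  have hΨη : ⟪Ψ, η⟫ = 0 := inner_apply_eq_zero_of_comp_eq_zero hΨ0 hPΨ hPR _
  set Φ := Ψ - (κ : ℂ) • η
  have hΦ : ‖Φ‖ ^ 2 = 1 + κ ^ 2 * ‖η‖ ^ 2 := by
    rw [norm_sub_smul_sq_of_inner_eq_zero hΨη, hΨnorm, Complex.norm_real, Real.norm_eq_abs,
      sq_abs, one_pow]
  have hΦ0 : Φ ≠ 0 := norm_ne_zero_iff.mp fun h => by
    rw [h, zero_pow two_ne_zero] at hΦ
    linarith [show 0 < 1 + κ ^ 2 * ‖η‖ ^ 2 by positivity]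
  set Ξ := (‖Φ‖⁻¹ : ℂ) • Φ
  have hval : (⟪Ξ, T Ξ⟫).re = E₀ + (κ * (⟪Ψ, SI Ψ⟫).re - (⟪SI Ψ, η⟫).re * κ ^ 2
      + (⟪η, SI η⟫).re * κ ^ 3) / (1 + κ ^ 2 * ‖η‖ ^ 2) := by
    have hquot : T.reApplyInnerSelf Ξ = T.reApplyInnerSelf Φ / ‖Φ‖ ^ 2 :=
      T.reApplyInnerSelf_smul_inv_norm Φ
    have hS₀η := apply_apply_eq_of_comp_eq_one_sub hPΨ hres (SI Ψ)
    rw [← RCLike.re_to_complex, T.re_inner_apply_eq_reApplyInnerSelf, hquot,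
      ← T.re_inner_apply_eq_reApplyInnerSelf, RCLike.re_to_complex,
      re_inner_sub_smul_apply_sub_smul hΨnorm hΨη hΨ hS₀η (hSI Ψ η).symm, hΦ]
    field_simp
  have hΞ : ‖Ξ‖ = 1 := norm_smul_inv_norm hΦ0
  exact ⟨⟨Ξ, hΞ, hval⟩,
    hval ▸ csInf_le T.bddBelow_re_inner_apply_of_norm_eq_one ⟨Ξ, hΞ, rfl⟩⟩

/-- Variational (Brillouin–Wigner) third-order upper bound on the ground-state
energy (Proposition A / Lemma 3.1), for bounded symmetric operators, with the
reduced resolvent `R` of `S₀` at `E₀` given axiomatically. -/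
theorem variational_upper_bound
    {H : Type*} [NormedAddCommGroup H] [InnerProductSpace ℂ H] [CompleteSpace H]
    (S₀ SI : H →L[ℂ] H)
    (hS₀ : ∀ x y : H, ⟪S₀ x, y⟫ = ⟪x, S₀ y⟫)
    (hSI : ∀ x y : H, ⟪SI x, y⟫ = ⟪x, SI y⟫)
    (E₀ : ℝ) (Ψ : H) (hΨnorm : ‖Ψ‖ = 1) (hΨ : S₀ Ψ = (E₀ : ℂ) • Ψ)
    (P : H →L[ℂ] H) (hP : ∀ x : H, P x = (Submodule.orthogonalProjectionOnto (ℂ ∙ Ψ) x : H))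
    (R : H →L[ℂ] H) (hPR : P ∘L R = 0) (hRP : R ∘L P = 0)
    (hres : (S₀ - (E₀ : ℂ) • (1 : H →L[ℂ] H)) ∘L R = 1 - P)
    (κ : ℝ) :
    (∃ Ξ : H, ‖Ξ‖ = 1 ∧
      (⟪Ξ, (S₀ + (κ : ℂ) • SI) Ξ⟫).re =
        E₀ + (κ * (⟪Ψ, SI Ψ⟫).re - (⟪SI Ψ, R (SI Ψ)⟫).re * κ ^ 2
              + (⟪R (SI Ψ), SI (R (SI Ψ))⟫).re * κ ^ 3)
             / (1 + κ ^ 2 * ‖R (SI Ψ)‖ ^ 2)) ∧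
    sInf {e : ℝ | ∃ Φ : H, ‖Φ‖ = 1 ∧ e = (⟪Φ, (S₀ + (κ : ℂ) • SI) Φ⟫).re} ≤
      E₀ + (κ * (⟪Ψ, SI Ψ⟫).re - (⟪SI Ψ, R (SI Ψ)⟫).re * κ ^ 2
            + (⟪R (SI Ψ), SI (R (SI Ψ))⟫).re * κ ^ 3)
           / (1 + κ ^ 2 * ‖R (SI Ψ)‖ ^ 2) :=
  variational_upper_bound_general S₀ SI hSI E₀ Ψ hΨnorm hΨ P hP R hPR hres κ
end

section
/- Let H be a complex Hilbert space and let A and B be bounded symmetric operators on H that commute (A∘B = B∘A). Then for every Φ ∈ H, |⟪A³Φ, B³Φ⟫| ≤ Re⟪A⁴Φ, B⁴Φ⟫ + (1/2)‖Φ‖². -/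
/-!
With `S = A B`, which is symmetric because `A` and `B` commute, moving powers of `A` and `B`
across the inner product gives `⟪A³Φ, B³Φ⟫ = ⟪S²Φ, SΦ⟫` and `⟪A⁴Φ, B⁴Φ⟫ = ‖S²Φ‖²`, while
`‖SΦ‖² = ⟪Φ, S²Φ⟫ ≤ ‖Φ‖ ‖S²Φ‖`. Cauchy–Schwarz and two applications of AM–GM finish:
`‖S²Φ‖ ‖SΦ‖ ≤ (‖S²Φ‖² + ‖Φ‖ ‖S²Φ‖) / 2 ≤ ‖S²Φ‖² + ‖Φ‖² / 2`.
-/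

open scoped ComplexInnerProductSpace InnerProductSpace

section

variable {𝕜 E : Type*} [RCLike 𝕜] [NormedAddCommGroup E] [InnerProductSpace 𝕜 E]

namespace LinearMap

theorem inner_pow_apply_pow_apply_of_commute {A B : E →ₗ[𝕜] E} (hA : A.IsSymmetric)
    (hAB : Commute A B) (n : ℕ) (x y : E) :
    ⟪(A ^ n) x, (B ^ n) y⟫_𝕜 = ⟪x, ((A * B) ^ n) y⟫_𝕜 := by
  rw [hA.pow n, hAB.mul_pow, Module.End.mul_apply]

namespace IsSymmetric

variable {S : E →ₗ[𝕜] E}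

theorem inner_pow_apply_pow_apply (hS : S.IsSymmetric) (k m : ℕ) (x y : E) :
    ⟪(S ^ k) x, (S ^ m) y⟫_𝕜 = ⟪x, (S ^ (k + m)) y⟫_𝕜 := by
  rw [hS.pow k, pow_add, Module.End.mul_apply]

theorem norm_apply_sq_le (hS : S.IsSymmetric) (x : E) :
    ‖S x‖ ^ 2 ≤ ‖x‖ * ‖S (S x)‖ :=
  calc ‖S x‖ ^ 2 = RCLike.re ⟪x, S (S x)⟫_𝕜 := by rw [@norm_sq_eq_re_inner 𝕜, hS]
    _ ≤ ‖⟪x, S (S x)⟫_𝕜‖ := RCLike.re_le_norm _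
    _ ≤ ‖x‖ * ‖S (S x)‖ := norm_inner_le_norm _ _

end IsSymmetric

end LinearMap

theorem norm_inner_le_norm_sq_add_half_norm_sq {u v w : E} (h : ‖v‖ ^ 2 ≤ ‖w‖ * ‖u‖) :
    ‖⟪u, v⟫_𝕜‖ ≤ ‖u‖ ^ 2 + 1 / 2 * ‖w‖ ^ 2 := by
  have := norm_inner_le_norm (𝕜 := 𝕜) u v
  nlinarith [sq_nonneg (‖u‖ - ‖v‖), sq_nonneg (‖u‖ - ‖w‖), norm_nonneg u, norm_nonneg w]

end

theorem abs_inner_cube_le'_general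
    {H : Type*} [NormedAddCommGroup H] [InnerProductSpace ℂ H]
    (A B : H →L[ℂ] H)
    (hA : ∀ x y : H, ⟪A x, y⟫ = ⟪x, A y⟫)
    (hB : ∀ x y : H, ⟪B x, y⟫ = ⟪x, B y⟫)
    (hAB : A ∘L B = B ∘L A) (Φ : H) :
    ‖⟪A (A (A Φ)), B (B (B Φ))⟫‖ ≤
      (⟪A (A (A (A Φ))), B (B (B (B Φ)))⟫).re + (1 / 2) * ‖Φ‖ ^ 2 := by
  have hcomm : Commute (A : H →ₗ[ℂ] H) B := congrArg ContinuousLinearMap.toLinearMap hAB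
  set S : H →ₗ[ℂ] H := A * B
  have hS : S.IsSymmetric := LinearMap.IsSymmetric.mul_of_commute hA hB hcomm
  have cube : ⟪A (A (A Φ)), B (B (B Φ))⟫ = ⟪(S ^ 2) Φ, (S ^ 1) Φ⟫ := by
    rw [hS.inner_pow_apply_pow_apply]
    exact LinearMap.inner_pow_apply_pow_apply_of_commute hA hcomm 3 Φ Φ
  have quartic : ⟪A (A (A (A Φ))), B (B (B (B Φ)))⟫ = ⟪(S ^ 2) Φ, (S ^ 2) Φ⟫ := by
    rw [hS.inner_pow_apply_pow_apply]
    exact LinearMap.inner_pow_apply_pow_apply_of_commute hA hcomm 4 Φ Φ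
  rw [cube, quartic, ← RCLike.re_to_complex, inner_self_eq_norm_sq]
  apply norm_inner_le_norm_sq_add_half_norm_sq
  simpa only [pow_one, sq, Module.End.mul_apply] using hS.norm_apply_sq_le Φ

/-- Inequality (12/04a): for commuting bounded symmetric operators `A`, `B`,
`|⟪A³Φ, B³Φ⟫| ≤ Re⟪A⁴Φ, B⁴Φ⟫ + (1/2)‖Φ‖²`. -/
theorem abs_inner_cube_le'
    {H : Type*} [NormedAddCommGroup H] [InnerProductSpace ℂ H] [CompleteSpace H]
    (A B : H →L[ℂ] H)
    (hA : ∀ x y : H, ⟪A x, y⟫ = ⟪x, A y⟫)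
    (hB : ∀ x y : H, ⟪B x, y⟫ = ⟪x, B y⟫)
    (hAB : A ∘L B = B ∘L A) (Φ : H) :
    ‖⟪A (A (A Φ)), B (B (B Φ))⟫‖ ≤
      (⟪A (A (A (A Φ))), B (B (B (B Φ)))⟫).re + (1 / 2) * ‖Φ‖ ^ 2 :=
  abs_inner_cube_le'_general A B hA hB hAB Φ
end
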